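/- Let C be a finite-type Cartan matrix of size n. For subsets I, J, K ⊆ {1,…,n}, with I having increasing enumeration I = {i_1 < … < i_l}, define d_{I,J}^K := [D_{i_1}···D_{i_l}]_{(J,K)}, the entry in row J and column K of the product of the equivariant structure-constant matrices. Then d_{I,J}^K ≠ 0 (as a polynomial in t) if and only if I ∪ J ⊆ K and, for every connected component V of K in the Dynkin graph of C, one has |V| ≤ |V ∩ I| + |V ∩ J|. -/

import Mathlib

/-- A finite-type Cartan matrix: an integer square matrix (on a nonempty finite index set) with
`2`'s on the diagonal, nonpositive off-diagonal entries, which becomes symmetric positive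
definite after multiplication by some diagonal matrix with strictly positive diagonal. -/
def IsFiniteCartan {ι : Type*} [Fintype ι] (C : Matrix ι ι ℤ) : Prop :=
  Nonempty ι ∧ (∀ i, C i i = 2) ∧ (∀ i j, i ≠ j → C i j ≤ 0) ∧
    ∃ D : Matrix ι ι ℝ, D.IsDiag ∧ (∀ i, 0 < D i i) ∧
      (D * C.map (Int.cast : ℤ → ℝ)).PosDef

/-- `[C_K⁻¹]_{i,k}`: the `(i,k)`-entry of the inverse of the principal submatrix of `C` (viewed
as a rational matrix) with rows and columns indexed by `K`, for `i, k ∈ K` (and `0` otherwise). -/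
noncomputable def cartanSubInv {n : ℕ} (C : Matrix (Fin n) (Fin n) ℤ) (K : Finset (Fin n))
    (i k : Fin n) : ℚ :=
  if hi : i ∈ K then
    if hk : k ∈ K then
      (((C.map (Int.cast : ℤ → ℚ)).submatrix (Subtype.val : {x // x ∈ K} → Fin n)
          Subtype.val)⁻¹) ⟨i, hi⟩ ⟨k, hk⟩
    else 0
  else 0

/-- The equivariant structure-constant matrix `D_i`: the `2ⁿ×2ⁿ` matrix over `ℚ[t]`, with rows
and columns indexed by subsets of `{1,…,n}`, whose `(J,K)`-entry is
`[C_K⁻¹]_{i,s}/[C_K⁻¹]_{s,s}` if `i ∈ K`, `|K| = |J|+1` and `K \ J = {s}`;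
is `2t·∑_{k∈K}[C_K⁻¹]_{i,k}` if `i ∈ K` and `K = J`; and is `0` otherwise. -/
noncomputable def Dmat {n : ℕ} (C : Matrix (Fin n) (Fin n) ℤ) (i : Fin n) :
    Matrix (Finset (Fin n)) (Finset (Fin n)) (Polynomial ℚ) :=
  Matrix.of fun J K =>
    if i ∈ K ∧ J ⊆ K ∧ K.card = J.card + 1 then
      Polynomial.C (∑ s ∈ K \ J, cartanSubInv C K i s / cartanSubInv C K s s)
    else if i ∈ K ∧ K = J then
      2 * Polynomial.X * Polynomial.C (∑ k ∈ K, cartanSubInv C K i k)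
    else 0

-- The connected component containing `v` of the subset `K` in the Dynkin graph of `C`
-- (the graph on the index set with an edge between distinct `a`, `b` iff `C_{ab} ≠ 0`):
-- the set of `u ∈ K` reachable from `v` by a path inside `K`.
open Classical in
noncomputable def dynkinComponent {n : ℕ} (C : Matrix (Fin n) (Fin n) ℤ)
    (K : Finset (Fin n)) (v : Fin n) : Finset (Fin n) :=
  K.filter fun u =>
    Relation.ReflTransGen (fun a b => a ∈ K ∧ b ∈ K ∧ a ≠ b ∧ C a b ≠ 0) v u


open Matrix Finset Polynomial

variable {n : ℕ} {C : Matrix (Fin n) (Fin n) ℤ}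

lemma diag_mul_apply {m : Type*} [Fintype m] [DecidableEq m]
    (D M : Matrix m m ℝ) (hD : D.IsDiag) (a b : m) : (D * M) a b = D a a * M a b := by
  rw [Matrix.mul_apply]
  rw [Finset.sum_eq_single a]
  · intro c _ hc; rw [hD hc.symm, zero_mul]
  · intro h; exact absurd (Finset.mem_univ a) h

lemma cartan_symm0 (hC : IsFiniteCartan C) (a b : Fin n) : C a b = 0 ↔ C b a = 0 := by
  obtain ⟨-, -, -, D, hD, hDpos, hPD⟩ := hC
  have key : D a a * (C a b : ℝ) = D b b * (C b a : ℝ) := by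
    have h := congrFun (congrFun hPD.1.symm a) b
    rw [Matrix.conjTranspose_apply, diag_mul_apply _ _ hD, diag_mul_apply _ _ hD,
      star_trivial] at h
    simpa [Matrix.map_apply] using h
  constructor <;> intro hz
  · rw [hz] at key
    have : D b b * (C b a : ℝ) = 0 := by simpa using key.symm
    rcases mul_eq_zero.mp this with h1 | h2
    · exact absurd h1 (ne_of_gt (hDpos b))
    · exact_mod_cast h2
  · rw [hz] at key
    have : D a a * (C a b : ℝ) = 0 := by simpa using key
    rcases mul_eq_zero.mp this with h1 | h2
    · exact absurd h1 (ne_of_gt (hDpos a))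
    · exact_mod_cast h2

/-- Key real positivity: quadratic form of the principal submatrix. -/
lemma cartan_quad (hC : IsFiniteCartan C) (K : Finset (Fin n)) (x : Fin n → ℝ)
    (hsupp : ∀ v ∉ K, x v = 0) (hx : x ≠ 0) :
    ∃ d : Fin n → ℝ, (∀ v, 0 < d v) ∧
      0 < ∑ a ∈ K, x a * d a * (∑ b ∈ K, (C a b : ℝ) * x b) := by
  obtain ⟨-, -, -, D, hD, hDpos, hPD⟩ := hC
  refine ⟨fun v => D v v, fun v => hDpos v, ?_⟩
  have h := hPD.dotProduct_mulVec_pos hx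
  rw [show star x = x from funext fun v => star_trivial _] at h
  have hexp : x ⬝ᵥ ((D * C.map (Int.cast : ℤ → ℝ)) *ᵥ x)
      = ∑ a ∈ K, x a * D a a * (∑ b ∈ K, (C a b : ℝ) * x b) := by
    rw [dotProduct, ← Finset.sum_subset (Finset.subset_univ K)
      (fun a _ ha => by rw [hsupp a ha, zero_mul])]
    refine Finset.sum_congr rfl fun a _ => ?_
    rw [Matrix.mulVec, dotProduct]
    have : ∀ b, (D * C.map (Int.cast : ℤ → ℝ)) a b * x b = D a a * ((C a b : ℝ) * x b) := by
      intro b; rw [diag_mul_apply _ _ hD]; simp [Matrix.map_apply]; ring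
    simp_rw [this]
    rw [← Finset.mul_sum, ← Finset.sum_subset (Finset.subset_univ K)
      (fun b _ hb => by rw [hsupp b hb, mul_zero])]
    ring
  rw [hexp] at h
  exact h

/-- uniqueness: a `K`-supported rational solution of the homogeneous system is zero -/
lemma cartan_unique (hC : IsFiniteCartan C) (K : Finset (Fin n)) (x : Fin n → ℚ)
    (hsupp : ∀ v ∉ K, x v = 0) (hrow : ∀ a ∈ K, ∑ b ∈ K, (C a b : ℚ) * x b = 0) :
    x = 0 := by
  by_contra hx
  obtain ⟨d, -, hpos⟩ := cartan_quad hC K (fun v => (x v : ℝ))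
    (fun v hv => by simp [hsupp v hv])
    (by
      intro h
      apply hx
      funext v
      have := congrFun h v
      simpa using this)
  have : ∀ a ∈ K, ∑ b ∈ K, ((C a b : ℝ)) * (x b : ℝ) = 0 := by
    intro a ha
    have := hrow a ha
    have := congrArg (Rat.cast : ℚ → ℝ) this
    push_cast at this
    simpa using this
  rw [Finset.sum_congr rfl (fun a ha => by rw [this a ha, mul_zero])] at hpos
  simp at hpos

/-- the determinant of the principal submatrix is nonzero -/
lemma cartan_det_ne (hC : IsFiniteCartan C) (K : Finset (Fin n)) :
    IsUnit ((C.map (Int.cast : ℤ → ℚ)).submatrix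
      (Subtype.val : {x // x ∈ K} → Fin n) Subtype.val).det := by
  rw [isUnit_iff_ne_zero]
  intro hdet
  obtain ⟨v, hv, hv0⟩ := (Matrix.exists_mulVec_eq_zero_iff).2 hdet
  set x : Fin n → ℚ := fun u => if h : u ∈ K then v ⟨u, h⟩ else 0 with hxdef
  have hx0 : x ≠ 0 := by
    intro h
    apply hv
    funext j
    have := congrFun h j.1
    simpa [hxdef, j.2] using this
  have hrow : ∀ a ∈ K, ∑ b ∈ K, (C a b : ℚ) * x b = 0 := by
    intro a ha
    have := congrFun hv0 ⟨a, ha⟩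
    rw [Matrix.mulVec, dotProduct] at this
    simp only [Pi.zero_apply] at this
    rw [← Finset.sum_coe_sort K (fun b => (C a b : ℚ) * x b)]
    rw [← this]
    refine Finset.sum_congr rfl fun b _ => ?_
    simp [hxdef, Matrix.map_apply, b.2]
  exact hx0 (cartan_unique hC K x (fun u hu => by simp [hxdef, hu]) hrow)

/-- the fundamental row equations for columns of the inverse -/
lemma cartan_rowEq (hC : IsFiniteCartan C) {K : Finset (Fin n)} {s : Fin n} (hs : s ∈ K)
    {a : Fin n} (ha : a ∈ K) :
    ∑ b ∈ K, (C a b : ℚ) * cartanSubInv C K b s = if a = s then 1 else 0 := by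
  have h := Matrix.mul_nonsing_inv _ (cartan_det_ne hC K)
  have h2 := congrFun (congrFun h ⟨a, ha⟩) ⟨s, hs⟩
  rw [Matrix.mul_apply] at h2
  rw [← Finset.sum_coe_sort K (fun b => (C a b : ℚ) * cartanSubInv C K b s)]
  have : ∀ b : {x // x ∈ K}, (C a b.1 : ℚ) * cartanSubInv C K b.1 s
      = ((C.map (Int.cast : ℤ → ℚ)).submatrix Subtype.val Subtype.val) ⟨a, ha⟩ b *
        ((C.map (Int.cast : ℤ → ℚ)).submatrix Subtype.val Subtype.val)⁻¹ b ⟨s, hs⟩ := by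
    intro b
    rw [cartanSubInv, dif_pos b.2, dif_pos hs]
    simp [Matrix.map_apply]
  rw [Finset.sum_congr rfl (fun b _ => this b), h2, Matrix.one_apply]
  by_cases has : a = s
  · subst has; simp
  · rw [if_neg (by simpa using has), if_neg has]

lemma cartanSubInv_eq_zero_left {K : Finset (Fin n)} {a : Fin n} (ha : a ∉ K) (s : Fin n) :
    cartanSubInv C K a s = 0 := by rw [cartanSubInv, dif_neg ha]

lemma cartanSubInv_eq_zero_right {K : Finset (Fin n)} {s : Fin n} (hs : s ∉ K) (a : Fin n) :
    cartanSubInv C K a s = 0 := by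
  simp [cartanSubInv, hs]


lemma cartanSubInv_nonneg (hC : IsFiniteCartan C) (K : Finset (Fin n)) (a s : Fin n) :
    0 ≤ cartanSubInv C K a s := by
  by_cases hs : s ∈ K
  swap
  · rw [cartanSubInv_eq_zero_right hs]
  by_cases ha : a ∈ K
  swap
  · rw [cartanSubInv_eq_zero_left ha]
  -- the column vector
  set x : Fin n → ℚ := fun v => cartanSubInv C K v s with hxdef
  -- negative part over ℝ
  set xr : Fin n → ℝ := fun v => (x v : ℝ) with hxrdef
  set mr : Fin n → ℝ := fun v => max (-(xr v)) 0 with hmrdef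
  set pr : Fin n → ℝ := fun v => max (xr v) 0 with hprdef
  have hmp : ∀ v, mr v = pr v - xr v := by
    intro v; simp [hmrdef, hprdef]
    rcases le_total (xr v) 0 with h | h
    · rw [max_eq_left (by linarith), max_eq_right h]; ring
    · rw [max_eq_right (by linarith), max_eq_left h]; ring
  have hmr_nonneg : ∀ v, 0 ≤ mr v := fun v => le_max_right _ _
  have hpr_nonneg : ∀ v, 0 ≤ pr v := fun v => le_max_right _ _
  have hmpr : ∀ v, mr v * pr v = 0 := by
    intro v
    rcases le_total (xr v) 0 with h | h
    · rw [hprdef]; simp [max_eq_right h]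
    · rw [hmrdef]; simp [max_eq_right (by linarith : -(xr v) ≤ 0)]
  have hrowR : ∀ b ∈ K, ∑ c ∈ K, (C b c : ℝ) * xr c = if b = s then 1 else 0 := by
    intro b hb
    have := cartan_rowEq hC hs hb
    have h2 := congrArg (Rat.cast : ℚ → ℝ) this
    push_cast at h2
    rw [show ((if b = s then 1 else 0 : ℚ) : ℝ) = (if b = s then 1 else 0 : ℝ) by
      split <;> simp] at h2
    exact h2
  -- suppose mr ≠ 0
  by_contra hneg
  push_neg at hneg
  have hmrne : mr ≠ 0 := by
    have hxa : xr a < 0 := by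
      simp only [hxrdef, hxdef]
      exact_mod_cast hneg
    have hma : 0 < mr a := lt_of_lt_of_le (by linarith) (le_max_left _ _)
    intro h
    rw [congrFun h a] at hma
    simp at hma
  have hsupp : ∀ v ∉ K, mr v = 0 := by
    intro v hv
    have : x v = 0 := cartanSubInv_eq_zero_left hv s
    simp [hmrdef, hxrdef, this]
  obtain ⟨d, hd, hq⟩ := cartan_quad hC K mr hsupp hmrne
  -- rewrite the inner sum
  have hsplit : ∀ b ∈ K, (∑ c ∈ K, (C b c : ℝ) * mr c)
      = (∑ c ∈ K, (C b c : ℝ) * pr c) - (if b = s then 1 else 0) := by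
    intro b hb
    rw [← hrowR b hb, ← Finset.sum_sub_distrib]
    refine Finset.sum_congr rfl fun c _ => by rw [hmp]; ring
  rw [Finset.sum_congr rfl (fun b hb => by rw [hsplit b hb])] at hq
  have hexpand : ∑ b ∈ K, mr b * d b * ((∑ c ∈ K, (C b c : ℝ) * pr c) - (if b = s then 1 else 0))
      = (∑ b ∈ K, ∑ c ∈ K, mr b * d b * ((C b c : ℝ) * pr c))
        - (∑ b ∈ K, mr b * d b * (if b = s then 1 else 0)) := by
    rw [← Finset.sum_sub_distrib]
    refine Finset.sum_congr rfl fun b _ => ?_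
    rw [mul_sub, Finset.mul_sum]
  rw [hexpand] at hq
  have hS1 : (∑ b ∈ K, ∑ c ∈ K, mr b * d b * ((C b c : ℝ) * pr c)) ≤ 0 := by
    refine Finset.sum_nonpos fun b hb => Finset.sum_nonpos fun c hc => ?_
    by_cases hbc : b = c
    · subst hbc
      rw [mul_comm (mr b) (d b), mul_assoc, mul_comm ((C b b : ℝ)) (pr b), ← mul_assoc (mr b),
        hmpr b]
      simp
    · have hC0 : (C b c : ℝ) ≤ 0 := by
        have := hC.2.2.1 b c hbc
        exact_mod_cast this
      have h1 : 0 ≤ mr b * d b := mul_nonneg (hmr_nonneg b) (le_of_lt (hd b))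
      have h2 : (C b c : ℝ) * pr c ≤ 0 := mul_nonpos_of_nonpos_of_nonneg hC0 (hpr_nonneg c)
      exact mul_nonpos_of_nonneg_of_nonpos h1 h2
  have hS2 : 0 ≤ ∑ b ∈ K, mr b * d b * (if b = s then 1 else 0) := by
    refine Finset.sum_nonneg fun b _ => ?_
    by_cases hbs : b = s
    · rw [if_pos hbs]; simpa using mul_nonneg (hmr_nonneg b) (le_of_lt (hd b))
    · rw [if_neg hbs]; simp
  linarith

lemma cartanSubInv_diag_pos (hC : IsFiniteCartan C) {K : Finset (Fin n)} {s : Fin n}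
    (hs : s ∈ K) : 0 < cartanSubInv C K s s := by
  set x : Fin n → ℚ := fun v => cartanSubInv C K v s with hxdef
  have hx0 : x ≠ 0 := by
    intro h
    have := cartan_rowEq hC hs hs
    rw [if_pos rfl] at this
    rw [Finset.sum_congr rfl (fun b _ => by rw [show cartanSubInv C K b s = 0 from congrFun h b, mul_zero])] at this
    simp at this
  obtain ⟨d, hd, hq⟩ := cartan_quad hC K (fun v => (x v : ℝ))
    (fun v hv => by simp [hxdef, cartanSubInv_eq_zero_left hv])
    (by intro h; apply hx0; funext v; have := congrFun h v; simpa using this)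
  have hrowR : ∀ b ∈ K, ∑ c ∈ K, (C b c : ℝ) * (x c : ℝ) = if b = s then 1 else 0 := by
    intro b hb
    have h2 := congrArg (Rat.cast : ℚ → ℝ) (cartan_rowEq hC hs hb)
    push_cast at h2
    rw [show ((if b = s then 1 else 0 : ℚ) : ℝ) = (if b = s then 1 else 0 : ℝ) by
      split <;> simp] at h2
    exact h2
  rw [Finset.sum_congr rfl (fun b hb => by rw [hrowR b hb])] at hq
  have : ∑ b ∈ K, (x b : ℝ) * d b * (if b = s then 1 else 0) = (x s : ℝ) * d s := by
    rw [Finset.sum_eq_single s]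
    · simp
    · intro b _ hbs; rw [if_neg hbs, mul_zero]
    · intro h; exact absurd hs h
  rw [this] at hq
  have hds := hd s
  have : (0 : ℝ) < (x s : ℝ) := by
    by_contra hle
    push_neg at hle
    nlinarith
  exact_mod_cast this

/-- the adjacency-within-`K` relation -/
def dynkinRel {n : ℕ} (C : Matrix (Fin n) (Fin n) ℤ) (K : Finset (Fin n)) (a b : Fin n) : Prop :=
  a ∈ K ∧ b ∈ K ∧ a ≠ b ∧ C a b ≠ 0

lemma dynkinRel_symm (hC : IsFiniteCartan C) (K : Finset (Fin n)) :
    Symmetric (dynkinRel C K) := by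
  intro a b ⟨ha, hb, hab, hcab⟩
  exact ⟨hb, ha, hab.symm, fun h => hcab ((cartan_symm0 hC a b).2 h)⟩

lemma dynkinReach_symm (hC : IsFiniteCartan C) (K : Finset (Fin n)) :
    Symmetric (Relation.ReflTransGen (dynkinRel C K)) :=
  by
    haveI : Std.Symm (dynkinRel C K) := ⟨fun a b h => dynkinRel_symm hC K h⟩
    exact fun a b h => Std.Symm.symm a b h

lemma cartanSubInv_pos_of_reach (hC : IsFiniteCartan C) {K : Finset (Fin n)} {s a : Fin n}
    (hs : s ∈ K) (h : Relation.ReflTransGen (dynkinRel C K) s a) :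
    0 < cartanSubInv C K a s := by
  induction h with
  | refl => exact cartanSubInv_diag_pos hC hs
  | @tail b c h1 h2 ih =>
    obtain ⟨hb, hcK, hbc, hCbc⟩ := h2
    by_cases hcs : c = s
    · subst hcs; exact cartanSubInv_diag_pos hC hs
    · have hrow := cartan_rowEq hC hs hcK
      rw [if_neg hcs] at hrow
      rw [← Finset.add_sum_erase _ _ hcK] at hrow
      have hcc : (C c c : ℚ) = 2 := by rw [hC.2.1 c]; norm_num
      rw [hcc] at hrow
      have hterm : (-(C c b : ℚ)) * cartanSubInv C K b s
          ≤ ∑ b' ∈ K.erase c, (-(C c b' : ℚ)) * cartanSubInv C K b' s := by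
        refine Finset.single_le_sum (f := fun b' => (-(C c b' : ℚ)) * cartanSubInv C K b' s) (fun b' hb' => ?_) (Finset.mem_erase.2 ⟨fun h => hbc h, hb⟩ : b ∈ K.erase c)
        have hne : c ≠ b' := fun h => (Finset.mem_erase.1 hb').1 h.symm
        have : (C c b' : ℚ) ≤ 0 := by exact_mod_cast hC.2.2.1 c b' hne
        exact mul_nonneg (by linarith) (cartanSubInv_nonneg hC K b' s)
      have hneg : ∑ b' ∈ K.erase c, (-(C c b' : ℚ)) * cartanSubInv C K b' s
          = -∑ b' ∈ K.erase c, (C c b' : ℚ) * cartanSubInv C K b' s := by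
        rw [← Finset.sum_neg_distrib]
        exact Finset.sum_congr rfl fun _ _ => by ring
      have hCcb : (C c b : ℚ) < 0 := by
        have h1 : (C c b : ℚ) ≤ 0 := by exact_mod_cast hC.2.2.1 c b (fun h => hbc h.symm)
        have h2 : (C c b : ℚ) ≠ 0 := by
          simpa using fun h => hCbc ((cartan_symm0 hC c b).1 h)
        exact lt_of_le_of_ne h1 h2
      nlinarith [ih, cartanSubInv_nonneg hC K b s]

open Classical in
lemma cartanSubInv_eq_zero_of_not_reach (hC : IsFiniteCartan C) {K : Finset (Fin n)}
    {s a : Fin n} (hs : s ∈ K) (ha : a ∈ K)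
    (h : ¬ Relation.ReflTransGen (dynkinRel C K) s a) : cartanSubInv C K a s = 0 := by
  classical
  set x : Fin n → ℚ := fun v => cartanSubInv C K v s with hxdef
  set y : Fin n → ℚ := fun v => if Relation.ReflTransGen (dynkinRel C K) s v then x v else 0
    with hydef
  have hyrow : ∀ b ∈ K, ∑ c ∈ K, (C b c : ℚ) * y c = if b = s then 1 else 0 := by
    intro b hb
    by_cases hrb : Relation.ReflTransGen (dynkinRel C K) s b
    · rw [← cartan_rowEq hC hs hb]
      refine Finset.sum_congr rfl fun c hc => ?_
      by_cases hrc : Relation.ReflTransGen (dynkinRel C K) s c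
      · rw [hydef]; simp [hrc]; exact Or.inl rfl
      · have hCbc : (C b c : ℚ) = 0 := by
          by_contra hne
          apply hrc
          have hbc : b ≠ c := by rintro rfl; exact hrc hrb
          exact hrb.tail ⟨hb, hc, hbc, by exact_mod_cast hne⟩
        rw [hCbc, zero_mul, zero_mul]
    · have hbs : b ≠ s := by rintro rfl; exact hrb Relation.ReflTransGen.refl
      rw [if_neg hbs]
      refine Finset.sum_eq_zero fun c hc => ?_
      by_cases hrc : Relation.ReflTransGen (dynkinRel C K) s c
      · have hCbc : (C b c : ℚ) = 0 := by
          by_contra hne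
          apply hrb
          have hbc : c ≠ b := by rintro rfl; exact hrb hrc
          refine hrc.tail ⟨hc, hb, hbc, ?_⟩
          intro h0
          exact (by exact_mod_cast hne : C b c ≠ 0) ((cartan_symm0 hC b c).2 h0)
        rw [hCbc, zero_mul]
      · rw [hydef]; simp [hrc]
  have hz : x - y = 0 := by
    refine cartan_unique hC K (x - y) (fun v hv => ?_) (fun b hb => ?_)
    · have hx0 : x v = 0 := cartanSubInv_eq_zero_left hv s
      have hy0 : y v = 0 := by rw [hydef]; simp [hx0]
      simp [hx0, hy0]
    · have h1 := cartan_rowEq hC hs hb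
      have h2 := hyrow b hb
      have : ∑ c ∈ K, (C b c : ℚ) * (x - y) c
          = (∑ c ∈ K, (C b c : ℚ) * x c) - ∑ c ∈ K, (C b c : ℚ) * y c := by
        rw [← Finset.sum_sub_distrib]
        exact Finset.sum_congr rfl fun c _ => by simp [mul_sub]
      rw [this, h1, h2, sub_self]
  have := congrFun hz a
  simp only [Pi.sub_apply, Pi.zero_apply, sub_eq_zero, hydef, hxdef] at this
  simpa [h] using this

lemma cartanSubInv_rowsum_pos (hC : IsFiniteCartan C) {K : Finset (Fin n)} {i : Fin n}
    (hi : i ∈ K) : 0 < ∑ k ∈ K, cartanSubInv C K i k :=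
  Finset.sum_pos' (fun k _ => cartanSubInv_nonneg hC K i k)
    ⟨i, hi, cartanSubInv_diag_pos hC hi⟩

lemma mem_dynkinComponent {K : Finset (Fin n)} {v u : Fin n} :
    u ∈ dynkinComponent C K v ↔ u ∈ K ∧ Relation.ReflTransGen (dynkinRel C K) v u := by
  classical
  simp only [dynkinComponent, Finset.mem_filter]
  rfl

lemma dynkinComponent_subset {K : Finset (Fin n)} {v : Fin n} :
    dynkinComponent C K v ⊆ K := fun u hu => (mem_dynkinComponent.1 hu).1

lemma mem_dynkinComponent_self {K : Finset (Fin n)} {v : Fin n} (hv : v ∈ K) :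
    v ∈ dynkinComponent C K v := mem_dynkinComponent.2 ⟨hv, Relation.ReflTransGen.refl⟩

/-- insert-singleton decomposition -/
lemma exists_insert_of_card_succ {J K' : Finset (Fin n)} (hJK : J ⊆ K')
    (hcard : K'.card = J.card + 1) : ∃ s, s ∉ J ∧ K' = insert s J := by
  have h1 : (K' \ J).card = 1 := by
    rw [Finset.card_sdiff_of_subset hJK, hcard]; omega
  obtain ⟨s, hs⟩ := Finset.card_eq_one.1 h1
  have hsmem : s ∈ K' \ J := hs ▸ Finset.mem_singleton_self s
  refine ⟨s, (Finset.mem_sdiff.1 hsmem).2, ?_⟩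
  ext x
  simp only [Finset.mem_insert]
  constructor
  · intro hx
    by_cases hxJ : x ∈ J
    · exact Or.inr hxJ
    · left
      have : x ∈ K' \ J := Finset.mem_sdiff.2 ⟨hx, hxJ⟩
      rw [hs] at this
      exact Finset.mem_singleton.1 this
  · rintro (rfl | hx)
    · exact (Finset.mem_sdiff.1 hsmem).1
    · exact hJK hx

def DStep {n : ℕ} (C : Matrix (Fin n) (Fin n) ℤ) (i : Fin n) (J K' : Finset (Fin n)) : Prop :=
  (i ∈ J ∧ K' = J) ∨ ∃ s, s ∉ J ∧ K' = insert s J ∧ i ∈ K' ∧ s ∈ dynkinComponent C K' i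

lemma Dmat_ne_zero_iff (hC : IsFiniteCartan C) (i : Fin n) (J K' : Finset (Fin n)) :
    Dmat C i J K' ≠ 0 ↔ DStep C i J K' := by
  rw [Dmat, Matrix.of_apply]
  by_cases h1 : i ∈ K' ∧ J ⊆ K' ∧ K'.card = J.card + 1
  · rw [if_pos h1]
    obtain ⟨hiK, hJK, hcard⟩ := h1
    obtain ⟨s, hsJ, hins⟩ := exists_insert_of_card_succ hJK hcard
    have hsK : s ∈ K' := hins ▸ Finset.mem_insert_self s J
    have hsd : K' \ J = {s} := by
      rw [hins]
      ext x
      simp only [Finset.mem_sdiff, Finset.mem_insert, Finset.mem_singleton]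
      constructor
      · rintro ⟨rfl | hx, hnx⟩
        · rfl
        · exact absurd hx hnx
      · rintro rfl
        exact ⟨Or.inl rfl, hsJ⟩
    rw [hsd, Finset.sum_singleton]
    have hss : cartanSubInv C K' s s ≠ 0 := ne_of_gt (cartanSubInv_diag_pos hC hsK)
    have hiff : cartanSubInv C K' i s ≠ 0 ↔
        Relation.ReflTransGen (dynkinRel C K') i s := by
      constructor
      · intro hne
        by_contra hre
        exact hne (cartanSubInv_eq_zero_of_not_reach hC hsK hiK
          (fun h => hre (dynkinReach_symm hC K' h)))
      · intro hre
        exact ne_of_gt (cartanSubInv_pos_of_reach hC hsK (dynkinReach_symm hC K' hre))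
    constructor
    · intro hne
      right
      refine ⟨s, hsJ, hins, hiK, mem_dynkinComponent.2 ⟨hsK, ?_⟩⟩
      rw [← hiff]
      intro h0
      apply hne
      rw [h0, zero_div, map_zero]
    · rintro (⟨hiJ, rfl⟩ | ⟨s', hs'J, hins', hiK', hcomp⟩)
      · omega
      · have hss' : s' = s := by
          have : s' ∈ K' \ J := Finset.mem_sdiff.2 ⟨hins' ▸ Finset.mem_insert_self s' J, hs'J⟩
          rw [hsd] at this
          exact Finset.mem_singleton.1 this
        subst hss'
        have hre := (mem_dynkinComponent.1 hcomp).2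
        intro h0
        rw [Polynomial.C_eq_zero, _root_.div_eq_zero_iff] at h0
        rcases h0 with h0 | h0
        · exact hiff.2 hre h0
        · exact hss h0
  · rw [if_neg h1]
    by_cases h2 : i ∈ K' ∧ K' = J
    · rw [if_pos h2]
      constructor
      · intro _
        exact Or.inl ⟨h2.2 ▸ h2.1, h2.2⟩
      · intro _
        refine mul_ne_zero (mul_ne_zero two_ne_zero Polynomial.X_ne_zero) ?_
        rw [Ne, Polynomial.C_eq_zero]
        exact ne_of_gt (cartanSubInv_rowsum_pos hC h2.1)
    · rw [if_neg h2]
      simp only [ne_eq, not_true_eq_false, not_not]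
      constructor
      · intro h; exact h.elim
      · rintro (⟨hiJ, rfl⟩ | ⟨s, hsJ, hins, hiK', hcomp⟩)
        · exact absurd ⟨hiJ, rfl⟩ h2
        · exact absurd ⟨hiK', Finset.Subset.trans (Finset.subset_insert s J) (le_of_eq hins.symm),
            by rw [hins, Finset.card_insert_of_notMem hsJ]⟩ h1

/-- polynomials with nonnegative coefficients -/
def NNPoly (p : Polynomial ℚ) : Prop := ∀ k, 0 ≤ p.coeff k

lemma NNPoly_zero : NNPoly 0 := fun k => by simp
lemma NNPoly_one : NNPoly 1 := fun k => by
  rw [Polynomial.coeff_one]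
  split <;> norm_num
lemma NNPoly_C {q : ℚ} (h : 0 ≤ q) : NNPoly (Polynomial.C q) := fun k => by
  rw [Polynomial.coeff_C]
  split <;> simp [h]
lemma NNPoly_X : NNPoly (Polynomial.X : Polynomial ℚ) := fun k => by
  rw [Polynomial.coeff_X]
  split <;> norm_num
lemma NNPoly_two : NNPoly (2 : Polynomial ℚ) := by
  have : (2 : Polynomial ℚ) = Polynomial.C 2 := by
    rw [map_ofNat]
  rw [this]
  exact NNPoly_C (by norm_num)
lemma NNPoly_mul {p q : Polynomial ℚ} (hp : NNPoly p) (hq : NNPoly q) : NNPoly (p * q) := by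
  intro k
  rw [Polynomial.coeff_mul]
  exact Finset.sum_nonneg fun x _ => mul_nonneg (hp x.1) (hq x.2)
lemma NNPoly_add {p q : Polynomial ℚ} (hp : NNPoly p) (hq : NNPoly q) : NNPoly (p + q) := by
  intro k
  rw [Polynomial.coeff_add]
  exact add_nonneg (hp k) (hq k)
lemma NNPoly_sum {α : Type*} {s : Finset α} {f : α → Polynomial ℚ}
    (h : ∀ a ∈ s, NNPoly (f a)) : NNPoly (∑ a ∈ s, f a) := by
  intro k
  rw [Polynomial.finset_sum_coeff]
  exact Finset.sum_nonneg fun a ha => h a ha k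

/-- no cancellation: a sum of nonneg-coefficient polynomials is nonzero iff a summand is -/
lemma NNPoly_sum_ne_zero_iff {α : Type*} {s : Finset α} {f : α → Polynomial ℚ}
    (h : ∀ a ∈ s, NNPoly (f a)) : (∑ a ∈ s, f a) ≠ 0 ↔ ∃ a ∈ s, f a ≠ 0 := by
  constructor
  · intro hne
    by_contra hall
    push_neg at hall
    exact hne (Finset.sum_eq_zero hall)
  · rintro ⟨a, ha, hfa⟩
    obtain ⟨k, hk⟩ : ∃ k, (f a).coeff k ≠ 0 := by
      by_contra hall
      push_neg at hall
      exact hfa (Polynomial.ext fun k => hall k)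
    have hpos : 0 < (f a).coeff k := lt_of_le_of_ne (h a ha k) (Ne.symm hk)
    intro hz
    have : (∑ b ∈ s, f b).coeff k = 0 := by rw [hz]; simp
    rw [Polynomial.finset_sum_coeff] at this
    have hle : (f a).coeff k ≤ ∑ b ∈ s, (f b).coeff k :=
      Finset.single_le_sum (fun b hb => h b hb k) ha
    linarith

lemma Dmat_entry_NNPoly (hC : IsFiniteCartan C) (i : Fin n) (J K' : Finset (Fin n)) :
    NNPoly (Dmat C i J K') := by
  rw [Dmat, Matrix.of_apply]
  split
  · refine NNPoly_C (Finset.sum_nonneg fun s hs => ?_)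
    exact div_nonneg (cartanSubInv_nonneg hC K' i s) (cartanSubInv_nonneg hC K' s s)
  split
  · exact NNPoly_mul (NNPoly_mul NNPoly_two NNPoly_X)
      (NNPoly_C (Finset.sum_nonneg fun k _ => cartanSubInv_nonneg hC K' i k))
  · exact NNPoly_zero

/-- admissible chains -/
def AdmChain {n : ℕ} (C : Matrix (Fin n) (Fin n) ℤ) :
    List (Fin n) → Finset (Fin n) → Finset (Fin n) → Prop
  | [], J, K => J = K
  | i :: L, J, K => ∃ K', DStep C i J K' ∧ AdmChain C L K' K

lemma prod_entry_NNPoly (hC : IsFiniteCartan C) :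
    ∀ (L : List (Fin n)) (J K : Finset (Fin n)), NNPoly (((L.map (Dmat C)).prod) J K) := by
  intro L
  induction L with
  | nil =>
    intro J K
    simp only [List.map_nil, List.prod_nil]
    rw [Matrix.one_apply]
    split
    · exact NNPoly_one
    · exact NNPoly_zero
  | cons i L ih =>
    intro J K
    simp only [List.map_cons, List.prod_cons]
    rw [Matrix.mul_apply]
    exact NNPoly_sum fun K' _ => NNPoly_mul (Dmat_entry_NNPoly hC i J K') (ih K' K)

lemma prod_ne_zero_iff_admChain (hC : IsFiniteCartan C) :
    ∀ (L : List (Fin n)) (J K : Finset (Fin n)),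
      ((L.map (Dmat C)).prod) J K ≠ 0 ↔ AdmChain C L J K := by
  intro L
  induction L with
  | nil =>
    intro J K
    simp only [List.map_nil, List.prod_nil, AdmChain]
    rw [Matrix.one_apply]
    split
    · simpa using ‹J = K›
    · simpa using ‹¬ J = K›
  | cons i L ih =>
    intro J K
    simp only [List.map_cons, List.prod_cons, AdmChain]
    rw [Matrix.mul_apply]
    rw [NNPoly_sum_ne_zero_iff (fun K' _ =>
      NNPoly_mul (Dmat_entry_NNPoly hC i J K') (prod_entry_NNPoly hC L K' K))]
    constructor
    · rintro ⟨K', -, hne⟩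
      rcases mul_ne_zero_iff.1 hne with ⟨h1, h2⟩
      exact ⟨K', (Dmat_ne_zero_iff hC i J K').1 h1, (ih K' K).1 h2⟩
    · rintro ⟨K', h1, h2⟩
      exact ⟨K', Finset.mem_univ K',
        mul_ne_zero ((Dmat_ne_zero_iff hC i J K').2 h1) ((ih K' K).2 h2)⟩

lemma reach_mono {K' K : Finset (Fin n)} (h : K' ⊆ K) {a b : Fin n}
    (hr : Relation.ReflTransGen (dynkinRel C K') a b) :
    Relation.ReflTransGen (dynkinRel C K) a b :=
  Relation.ReflTransGen.mono (r := dynkinRel C K') (p := dynkinRel C K)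
    (fun x y ⟨hx, hy, hxy, hC0⟩ => ⟨h hx, h hy, hxy, hC0⟩) a b hr

lemma dynkinComponent_eq_of_mem (hC : IsFiniteCartan C) {K : Finset (Fin n)} {v u : Fin n}
    (h : u ∈ dynkinComponent C K v) : dynkinComponent C K u = dynkinComponent C K v := by
  obtain ⟨huK, hr⟩ := mem_dynkinComponent.1 h
  ext w
  simp only [mem_dynkinComponent]
  constructor
  · rintro ⟨hwK, hw⟩
    exact ⟨hwK, hr.trans hw⟩
  · rintro ⟨hwK, hw⟩
    exact ⟨hwK, (dynkinReach_symm hC K hr).trans hw⟩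

lemma mem_dynkinComponent_closure (hC : IsFiniteCartan C) {K : Finset (Fin n)} {v a b : Fin n}
    (ha : a ∈ dynkinComponent C K v) (hb : b ∈ K) (hC0 : C a b ≠ 0) :
    b ∈ dynkinComponent C K v := by
  obtain ⟨haK, hr⟩ := mem_dynkinComponent.1 ha
  by_cases hab : a = b
  · exact hab ▸ ha
  · exact mem_dynkinComponent.2 ⟨hb, hr.tail ⟨haK, hb, hab, hC0⟩⟩

lemma card_inter_insert_of_mem {V S : Finset (Fin n)} {i : Fin n} (hi : i ∈ V) (hiS : i ∉ S) :
    (V ∩ insert i S).card = (V ∩ S).card + 1 := by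
  have : V ∩ insert i S = insert i (V ∩ S) := by
    ext x
    simp only [Finset.mem_inter, Finset.mem_insert]
    constructor
    · rintro ⟨hxV, rfl | hxS⟩
      · exact Or.inl rfl
      · exact Or.inr ⟨hxV, hxS⟩
    · rintro (rfl | ⟨hxV, hxS⟩)
      · exact ⟨hi, Or.inl rfl⟩
      · exact ⟨hxV, Or.inr hxS⟩
  rw [this, Finset.card_insert_of_notMem (fun h => hiS (Finset.mem_inter.1 h).2)]

lemma inter_insert_of_not_mem' {V S : Finset (Fin n)} {i : Fin n} (hi : i ∉ V) :
    V ∩ insert i S = V ∩ S := by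
  ext x
  simp only [Finset.mem_inter, Finset.mem_insert]
  constructor
  · rintro ⟨hxV, rfl | hxS⟩
    · exact absurd hxV hi
    · exact ⟨hxV, hxS⟩
  · rintro ⟨hxV, hxS⟩
    exact ⟨hxV, Or.inr hxS⟩

lemma card_inter_insert_le {V S : Finset (Fin n)} {i : Fin n} :
    (V ∩ insert i S).card ≤ (V ∩ S).card + 1 := by
  have h : V ∩ insert i S ⊆ insert i (V ∩ S) := by
    intro x hx
    obtain ⟨hxV, hxi⟩ := Finset.mem_inter.1 hx
    rcases Finset.mem_insert.1 hxi with rfl | hxS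
    · exact Finset.mem_insert_self _ _
    · exact Finset.mem_insert_of_mem (Finset.mem_inter.2 ⟨hxV, hxS⟩)
  calc (V ∩ insert i S).card ≤ (insert i (V ∩ S)).card := Finset.card_le_card h
    _ ≤ (V ∩ S).card + 1 := Finset.card_insert_le _ _

/-- Forward: an admissible chain forces the component-counting condition. -/
lemma admChain_imp_cond (hC : IsFiniteCartan C) (K : Finset (Fin n)) :
    ∀ (L : List (Fin n)) (J : Finset (Fin n)), L.Nodup → AdmChain C L J K →
      J ⊆ K ∧ L.toFinset ⊆ K ∧ ∀ v ∈ K,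
        (dynkinComponent C K v).card ≤
          ((dynkinComponent C K v) ∩ L.toFinset).card +
          ((dynkinComponent C K v) ∩ J).card := by
  intro L
  induction L with
  | nil =>
    intro J _ hchain
    rw [AdmChain] at hchain
    subst hchain
    refine ⟨Finset.Subset.refl _, by simp, fun v hv => ?_⟩
    have h : dynkinComponent C J v ∩ J = dynkinComponent C J v :=
      Finset.inter_eq_left.2 dynkinComponent_subset
    rw [h]
    omega
  | cons i L ih =>
    intro J hnodup hchain
    obtain ⟨K', hstep, hchain'⟩ := hchain
    obtain ⟨hiL, hLnodup⟩ := List.nodup_cons.1 hnodup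
    obtain ⟨hK'K, hLK, hcount⟩ := ih K' hLnodup hchain'
    rcases hstep with ⟨hiJ, rfl⟩ | ⟨s, hsJ, hins, hiK', hcomp⟩
    · refine ⟨hK'K, ?_, fun v hv => ?_⟩
      · rw [List.toFinset_cons]
        exact Finset.insert_subset (hK'K hiJ) hLK
      · have h1 := hcount v hv
        rw [List.toFinset_cons]
        have h2 : (dynkinComponent C K v ∩ L.toFinset).card
            ≤ (dynkinComponent C K v ∩ insert i L.toFinset).card :=
          Finset.card_le_card (Finset.inter_subset_inter_left (Finset.subset_insert i _))
        omega
    · subst hins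
      have hJK : J ⊆ K := fun x hx => hK'K (Finset.mem_insert_of_mem hx)
      have hiK : i ∈ K := hK'K hiK'
      refine ⟨hJK, ?_, fun v hv => ?_⟩
      · rw [List.toFinset_cons]
        exact Finset.insert_subset hiK hLK
      · have h1 := hcount v hv
        rw [List.toFinset_cons]
        set V := dynkinComponent C K v with hV
        by_cases hsV : s ∈ V
        · have hiV : i ∈ V := by
            have hr : Relation.ReflTransGen (dynkinRel C K) i s :=
              reach_mono hK'K (mem_dynkinComponent.1 hcomp).2
            have hsKmem : s ∈ K := hK'K (Finset.mem_insert_self s J)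
            have h2 : s ∈ dynkinComponent C K i := mem_dynkinComponent.2 ⟨hsKmem, hr⟩
            have h3 : dynkinComponent C K s = dynkinComponent C K i :=
              dynkinComponent_eq_of_mem hC h2
            have h4 : dynkinComponent C K s = V := dynkinComponent_eq_of_mem hC hsV
            rw [← h4, h3]
            exact mem_dynkinComponent_self hiK
          have hiLs : i ∉ L.toFinset := fun h => hiL (List.mem_toFinset.1 h)
          have e1 : (V ∩ insert i L.toFinset).card = (V ∩ L.toFinset).card + 1 :=
            card_inter_insert_of_mem hiV hiLs
          have e2 : (V ∩ insert s J).card = (V ∩ J).card + 1 :=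
            card_inter_insert_of_mem hsV hsJ
          omega
        · have e2 : V ∩ insert s J = V ∩ J := inter_insert_of_not_mem' hsV
          have h2 : (V ∩ L.toFinset).card ≤ (V ∩ insert i L.toFinset).card :=
            Finset.card_le_card (Finset.inter_subset_inter_left (Finset.subset_insert i _))
          rw [e2] at h1
          omega

/-- Backward: the counting condition allows building an admissible chain. -/
lemma cond_imp_admChain (hC : IsFiniteCartan C) (K : Finset (Fin n)) :
    ∀ (L : List (Fin n)) (J : Finset (Fin n)), L.Nodup →
      (L.toFinset ∪ J ⊆ K) →
      (∀ v ∈ K, (dynkinComponent C K v).card ≤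
          ((dynkinComponent C K v) ∩ L.toFinset).card +
          ((dynkinComponent C K v) ∩ J).card) →
      AdmChain C L J K := by
  intro L
  induction L with
  | nil =>
    intro J _ hsub hcount
    rw [AdmChain]
    have hJK : J ⊆ K := fun x hx => hsub (Finset.mem_union_right _ hx)
    have hKJ : K ⊆ J := by
      intro v hv
      have h1 := hcount v hv
      simp only [List.toFinset_nil, Finset.inter_empty, Finset.card_empty, zero_add] at h1
      have h4 : dynkinComponent C K v ∩ J = dynkinComponent C K v :=
        Finset.eq_of_subset_of_card_le Finset.inter_subset_left h1
      have h5 : v ∈ dynkinComponent C K v := mem_dynkinComponent_self hv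
      rw [← h4] at h5
      exact (Finset.mem_inter.1 h5).2
    exact Finset.Subset.antisymm hJK hKJ
  | cons i L ih =>
    intro J hnodup hsub hcount
    obtain ⟨hiL, hLnodup⟩ := List.nodup_cons.1 hnodup
    have hiLs : i ∉ L.toFinset := fun h => hiL (List.mem_toFinset.1 h)
    rw [List.toFinset_cons] at hsub
    have hiK : i ∈ K := hsub (Finset.mem_union_left _ (Finset.mem_insert_self i _))
    have hLK : L.toFinset ⊆ K := fun x hx =>
      hsub (Finset.mem_union_left _ (Finset.mem_insert_of_mem hx))
    have hJK : J ⊆ K := fun x hx => hsub (Finset.mem_union_right _ hx)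
    by_cases hiJ : i ∈ J
    · -- i already present
      set U := dynkinComponent C J i with hU
      by_cases hex : ∃ s ∈ K, s ∉ J ∧ ∃ a ∈ U, C a s ≠ 0
      · obtain ⟨s, hsK, hsJ, a, haU, hCas⟩ := hex
        have haJ : a ∈ J := dynkinComponent_subset haU
        have hJK' : J ⊆ insert s J := Finset.subset_insert s J
        have hstep : DStep C i J (insert s J) := by
          refine Or.inr ⟨s, hsJ, rfl, Finset.mem_insert_of_mem hiJ, ?_⟩
          refine mem_dynkinComponent.2 ⟨Finset.mem_insert_self s J, ?_⟩
          have hra : Relation.ReflTransGen (dynkinRel C (insert s J)) i a :=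
            reach_mono hJK' (mem_dynkinComponent.1 haU).2
          exact hra.tail ⟨Finset.mem_insert_of_mem haJ, Finset.mem_insert_self s J,
            fun h => hsJ (h ▸ haJ), hCas⟩
        refine ⟨insert s J, hstep, ih (insert s J) hLnodup ?_ ?_⟩
        · exact Finset.union_subset hLK (Finset.insert_subset hsK hJK)
        · intro v hv
          have h1 := hcount v hv
          rw [List.toFinset_cons] at h1
          set V := dynkinComponent C K v with hV
          by_cases hsV : s ∈ V
          · have e2 : (V ∩ insert s J).card = (V ∩ J).card + 1 :=
              card_inter_insert_of_mem hsV hsJ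
            have h2 : (V ∩ insert i L.toFinset).card ≤ (V ∩ L.toFinset).card + 1 :=
              card_inter_insert_le
            omega
          · -- show i ∉ V, else contradiction
            have hiV : i ∉ V := by
              intro hiV
              apply hsV
              have haV : a ∈ V := by
                have hr : Relation.ReflTransGen (dynkinRel C K) i a :=
                  reach_mono hJK (mem_dynkinComponent.1 haU).2
                have : a ∈ dynkinComponent C K i :=
                  mem_dynkinComponent.2 ⟨hJK haJ, hr⟩
                rwa [dynkinComponent_eq_of_mem hC hiV] at this
              exact mem_dynkinComponent_closure hC haV hsK hCas
            have e1 : V ∩ insert i L.toFinset = V ∩ L.toFinset :=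
              inter_insert_of_not_mem' hiV
            have e2 : V ∩ insert s J = V ∩ J := inter_insert_of_not_mem' hsV
            rw [e1] at h1
            rw [e2]
            omega
      · -- the component of i in K is contained in J; stay put
        push_neg at hex
        have hUK : ∀ u, Relation.ReflTransGen (dynkinRel C K) i u → u ∈ U := by
          intro u hr
          induction hr with
          | refl => exact mem_dynkinComponent_self hiJ
          | @tail b u h1 h2 ihh =>
            obtain ⟨hbK, huK, hbu, hCbu⟩ := h2
            have hbU : b ∈ U := ihh
            have hbJ : b ∈ J := dynkinComponent_subset hbU
            by_cases huJ : u ∈ J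
            · exact mem_dynkinComponent.2 ⟨huJ,
                ((mem_dynkinComponent.1 hbU).2).tail ⟨hbJ, huJ, hbu, hCbu⟩⟩
            · exact absurd (hex u huK huJ b hbU) hCbu
        refine ⟨J, Or.inl ⟨hiJ, rfl⟩, ih J hLnodup (Finset.union_subset hLK hJK) ?_⟩
        intro v hv
        have h1 := hcount v hv
        rw [List.toFinset_cons] at h1
        set V := dynkinComponent C K v with hV
        by_cases hiV : i ∈ V
        · have hVJ : V ⊆ J := by
            intro u hu
            have : V = dynkinComponent C K i := (dynkinComponent_eq_of_mem hC hiV).symm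
            rw [this] at hu
            exact dynkinComponent_subset (hUK u (mem_dynkinComponent.1 hu).2)
          have : V ∩ J = V := Finset.inter_eq_left.2 hVJ
          have hle : (V ∩ L.toFinset).card + (V ∩ J).card ≥ (V).card := by
            rw [this]; omega
          omega
        · have e1 : V ∩ insert i L.toFinset = V ∩ L.toFinset :=
            inter_insert_of_not_mem' hiV
          rw [e1] at h1
          omega
    · -- i not yet present: insert it
      have hstep : DStep C i J (insert i J) :=
        Or.inr ⟨i, hiJ, rfl, Finset.mem_insert_self i J,
          mem_dynkinComponent_self (Finset.mem_insert_self i J)⟩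
      refine ⟨insert i J, hstep, ih (insert i J) hLnodup
        (Finset.union_subset hLK (Finset.insert_subset hiK hJK)) ?_⟩
      intro v hv
      have h1 := hcount v hv
      rw [List.toFinset_cons] at h1
      set V := dynkinComponent C K v with hV
      by_cases hiV : i ∈ V
      · have e1 : (V ∩ insert i L.toFinset).card = (V ∩ L.toFinset).card + 1 :=
          card_inter_insert_of_mem hiV hiLs
        have e2 : (V ∩ insert i J).card = (V ∩ J).card + 1 :=
          card_inter_insert_of_mem hiV hiJ
        omega
      · have e1 : V ∩ insert i L.toFinset = V ∩ L.toFinset := inter_insert_of_not_mem' hiV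
        have e2 : V ∩ insert i J = V ∩ J := inter_insert_of_not_mem' hiV
        rw [e1] at h1
        rw [e2]
        omega

/-- for `I = {i_1 < … < i_l}` define `d_{I,J}^K := [D_{i_1}···D_{i_l}]_{(J,K)}`.
Then `d_{I,J}^K ≠ 0` (as a polynomial in `t`) if and only if `I ∪ J ⊆ K` and, for every
connected component `V` of `K` in the Dynkin graph of `C`, `|V| ≤ |V ∩ I| + |V ∩ J|`. -/
theorem peterson_structure_constants_nonzero_iff_equivariant {n : ℕ}
    (C : Matrix (Fin n) (Fin n) ℤ) (hC : IsFiniteCartan C)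
    (I J K : Finset (Fin n)) :
    ((I.sort (· ≤ ·)).map (Dmat C)).prod J K ≠ 0 ↔
      I ∪ J ⊆ K ∧ ∀ v ∈ K,
        (dynkinComponent C K v).card ≤
          ((dynkinComponent C K v) ∩ I).card + ((dynkinComponent C K v) ∩ J).card := by
  classical
  set L : List (Fin n) := I.sort (· ≤ ·) with hL
  have hnodup : L.Nodup := I.sort_nodup _
  have htf : L.toFinset = I := I.sort_toFinset _
  rw [prod_ne_zero_iff_admChain hC L J K]
  constructor
  · intro h
    obtain ⟨hJK, hLK, hcount⟩ := admChain_imp_cond hC K L J hnodup h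
    rw [htf] at hLK hcount
    exact ⟨Finset.union_subset hLK hJK, hcount⟩
  · rintro ⟨hsub, hcount⟩
    refine cond_imp_admChain hC K L J hnodup ?_ ?_
    · rw [htf]; exact hsub
    · rw [htf]; exact hcount
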